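/- arXiv:2505.12435 — 4 statements merged into one kernel-verified Lean document; each statement's English description precedes it below -/
import Mathlib

section
/- For the DPO objective l(X₁, X₂) = log σ(β log X₁ - β log X₂) with X₁, X₂, β > 0, the absolute ratio of the partial derivatives satisfies |(∂l/∂X₁)/(∂l/∂X₂)| = X₂/X₁. -/
noncomputable def sigmoid (t : ℝ) : ℝ := 1 / (1 + Real.exp (-t))

lemma log_sigmoid (t : ℝ) : Real.log (sigmoid t) = -Real.log (1 + Real.exp (-t)) := by
  have h : (0:ℝ) < 1 + Real.exp (-t) := by positivity
  rw [sigmoid, Real.log_div one_ne_zero (ne_of_gt h), Real.log_one]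
  ring

lemma aux_deriv (a : ℝ) :
    HasDerivAt (fun t : ℝ => -Real.log (1 + Real.exp (-t)))
      (Real.exp (-a) / (1 + Real.exp (-a))) a := by
  have h : (0:ℝ) < 1 + Real.exp (-a) := by positivity
  have h1 : HasDerivAt (fun t : ℝ => 1 + Real.exp (-t)) (-Real.exp (-a)) a := by
    have := (Real.hasDerivAt_exp (-a)).comp a ((hasDerivAt_id a).neg)
    simpa using (this.const_add 1)
  have h2 := (h1.log (ne_of_gt h)).neg
  refine h2.congr_deriv ?_
  ring

lemma comp_deriv (β c x : ℝ) (hx : 0 < x) (s : ℝ) (hs : s = β * Real.log x - c) :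
    HasDerivAt (fun y : ℝ => -Real.log (1 + Real.exp (-(β * Real.log y - c))))
      (Real.exp (-s) / (1 + Real.exp (-s)) * (β / x)) x := by
  have hinner : HasDerivAt (fun y : ℝ => β * Real.log y - c) (β / x) x := by
    simpa [mul_div_assoc, div_eq_mul_inv] using ((Real.hasDerivAt_log (ne_of_gt hx)).const_mul β).sub_const c
  simpa [hs, Function.comp_def] using (aux_deriv (β * Real.log x - c)).comp x hinner

theorem stmt2 (β X₁ X₂ : ℝ) (hβ : 0 < β) (h1 : 0 < X₁) (h2 : 0 < X₂) :
    |deriv (fun x : ℝ => Real.log (sigmoid (β * Real.log x - β * Real.log X₂))) X₁ /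
      deriv (fun x : ℝ => Real.log (sigmoid (β * Real.log X₁ - β * Real.log x))) X₂|
      = X₂ / X₁ := by
  set A := β * Real.log X₁ - β * Real.log X₂ with hA
  set s := Real.exp (-A) / (1 + Real.exp (-A)) with hsdef
  have hspos : 0 < s := by positivity
  have hd1 : deriv (fun x : ℝ => Real.log (sigmoid (β * Real.log x - β * Real.log X₂))) X₁
      = s * (β / X₁) := by
    have := (comp_deriv β (β * Real.log X₂) X₁ h1 A hA)
    rw [show (fun x : ℝ => Real.log (sigmoid (β * Real.log x - β * Real.log X₂)))
        = fun x : ℝ => -Real.log (1 + Real.exp (-(β * Real.log x - β * Real.log X₂))) from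
        funext fun x => log_sigmoid _]
    exact this.deriv
  have hd2 : deriv (fun x : ℝ => Real.log (sigmoid (β * Real.log X₁ - β * Real.log x))) X₂
      = s * (-β / X₂) := by
    have hinner : HasDerivAt (fun y : ℝ => β * Real.log X₁ - β * Real.log y) (-β / X₂) X₂ := by
      have := ((Real.hasDerivAt_log (ne_of_gt h2)).const_mul β).const_sub (β * Real.log X₁)
      simpa [mul_div_assoc, neg_div, div_eq_mul_inv] using this
    have hcomp := (aux_deriv (β * Real.log X₁ - β * Real.log X₂)).comp X₂ hinner
    rw [show (fun x : ℝ => Real.log (sigmoid (β * Real.log X₁ - β * Real.log x)))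
        = fun x : ℝ => -Real.log (1 + Real.exp (-(β * Real.log X₁ - β * Real.log x))) from
        funext fun x => log_sigmoid _]
    simpa [hsdef, hA, Function.comp_def] using hcomp.deriv
  rw [hd1, hd2]
  rw [show s * (β / X₁) / (s * (-β / X₂)) = -(X₂ / X₁) by
    field_simp]
  rw [abs_neg, abs_of_pos (by positivity)]
end

section
/- Let β > 0 and X₁, X₂, Y₁, Y₂ > 0 with X₁ = p₁ Y₁ and X₂ = p₂ Y₂ for p₁, p₂ > 0, and set z = Y₁/Y₂. For the pilot objective l_pilot(X₁, X₂) = log σ(β log X₁ - β log Y₂) + log σ(β log Y₁ - β log X₂), the ratio of gradient magnitudes satisfies |(∂l_pilot/∂X₁)/(∂l_pilot/∂X₂)| = (X₂/X₁) · (1/p₂^β) · (z^β + p₂^β)/(p₁^β z^β + 1). -/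
lemma logsig_hasDerivAt (β c x : ℝ) (hx : 0 < x) :
    HasDerivAt (fun y => Real.log (sigmoid (β * Real.log y - c)))
      (β / (x * (1 + Real.exp (β * Real.log x - c)))) x := by
  have hfun : (fun y => Real.log (sigmoid (β * Real.log y - c)))
      = fun y => -Real.log (1 + Real.exp (-(β * Real.log y - c))) := by
    funext y; rw [sigmoid, one_div, Real.log_inv]
  rw [hfun]
  have h1 : HasDerivAt (fun y => β * Real.log y - c) (β * x⁻¹) x :=
    ((Real.hasDerivAt_log hx.ne').const_mul β).sub_const c
  have h3 := h1.fun_neg.exp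
  have h5 := (h3.const_add 1).log (by positivity)
  have h6 := h5.fun_neg
  refine h6.congr_deriv (Eq.symm ?_)
  rw [Real.exp_neg]
  have he : (0:ℝ) < Real.exp (β * Real.log x - c) := Real.exp_pos _
  rw [mul_neg, neg_div, neg_neg, div_eq_div_iff (by positivity) (by positivity)]
  field_simp
  ring

lemma logsig_hasDerivAt' (β b x : ℝ) (hx : 0 < x) :
    HasDerivAt (fun y => Real.log (sigmoid (b - β * Real.log y)))
      (-(β / (x * (1 + Real.exp (b - β * Real.log x))))) x := by
  have hfun : (fun y => Real.log (sigmoid (b - β * Real.log y)))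
      = fun y => -Real.log (1 + Real.exp (-(b - β * Real.log y))) := by
    funext y; rw [sigmoid, one_div, Real.log_inv]
  rw [hfun]
  have h1 : HasDerivAt (fun y => b - β * Real.log y) (-(β * x⁻¹)) x :=
    ((Real.hasDerivAt_log hx.ne').const_mul β).const_sub b
  have h3 := h1.fun_neg.exp
  have h5 := (h3.const_add 1).log (by positivity)
  have h6 := h5.fun_neg
  refine h6.congr_deriv (Eq.symm ?_)
  rw [Real.exp_neg]
  have he : (0:ℝ) < Real.exp (b - β * Real.log x) := Real.exp_pos _
  simp only [neg_neg]
  rw [neg_inj, div_eq_div_iff (by positivity) (by positivity)]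
  field_simp
  ring

theorem stmt10 (β X₁ X₂ Y₁ Y₂ p₁ p₂ z : ℝ) (hβ : 0 < β)
    (h1 : 0 < X₁) (h2 : 0 < X₂) (hY1 : 0 < Y₁) (hY2 : 0 < Y₂)
    (hp1 : 0 < p₁) (hp2 : 0 < p₂)
    (hX1 : X₁ = p₁ * Y₁) (hX2 : X₂ = p₂ * Y₂) (hz : z = Y₁ / Y₂) :
    |deriv (fun x : ℝ => Real.log (sigmoid (β * Real.log x - β * Real.log Y₂))
          + Real.log (sigmoid (β * Real.log Y₁ - β * Real.log X₂))) X₁ /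
      deriv (fun x : ℝ => Real.log (sigmoid (β * Real.log X₁ - β * Real.log Y₂))
          + Real.log (sigmoid (β * Real.log Y₁ - β * Real.log x))) X₂|
      = (X₂ / X₁) * ((1 / p₂ ^ β) * ((z ^ β + p₂ ^ β) / (p₁ ^ β * z ^ β + 1))) := by
  have hz0 : 0 < z := by rw [hz]; positivity
  have hD1 : deriv (fun x : ℝ => Real.log (sigmoid (β * Real.log x - β * Real.log Y₂))
        + Real.log (sigmoid (β * Real.log Y₁ - β * Real.log X₂))) X₁
      = β / (X₁ * (1 + Real.exp (β * Real.log X₁ - β * Real.log Y₂))) :=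
    ((logsig_hasDerivAt β (β * Real.log Y₂) X₁ h1).add_const _).deriv
  have hD2 : deriv (fun x : ℝ => Real.log (sigmoid (β * Real.log X₁ - β * Real.log Y₂))
        + Real.log (sigmoid (β * Real.log Y₁ - β * Real.log x))) X₂
      = -(β / (X₂ * (1 + Real.exp (β * Real.log Y₁ - β * Real.log X₂)))) :=
    ((logsig_hasDerivAt' β (β * Real.log Y₁) X₂ h2).const_add _).deriv
  have hexp : ∀ a b : ℝ, 0 < a → 0 < b →
      Real.exp (β * Real.log a - β * Real.log b) = a ^ β / b ^ β := by
    intro a b ha hb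
    rw [Real.exp_sub, Real.rpow_def_of_pos ha, Real.rpow_def_of_pos hb]
    ring_nf
  have hE1 : Real.exp (β * Real.log X₁ - β * Real.log Y₂) = p₁ ^ β * z ^ β := by
    rw [hexp X₁ Y₂ h1 hY2, hX1, hz, Real.mul_rpow hp1.le hY1.le,
      Real.div_rpow hY1.le hY2.le, mul_div_assoc]
  have hE2 : Real.exp (β * Real.log Y₁ - β * Real.log X₂) = z ^ β / p₂ ^ β := by
    rw [hexp Y₁ X₂ hY1 h2, hX2, hz, Real.mul_rpow hp2.le hY2.le,
      Real.div_rpow hY1.le hY2.le, div_div]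
    ring_nf
  rw [hD1, hD2, hE1, hE2]
  have hzp : (0:ℝ) < z ^ β := Real.rpow_pos_of_pos hz0 β
  have hp1p : (0:ℝ) < p₁ ^ β := Real.rpow_pos_of_pos hp1 β
  have hp2p : (0:ℝ) < p₂ ^ β := Real.rpow_pos_of_pos hp2 β
  rw [div_neg, abs_neg, abs_div, abs_of_pos (by positivity), abs_of_pos (by positivity)]
  field_simp
  ring
end

section
/- For β > 0 and fixed X₁ > 0, the limit as X₂ → 0⁺ of the DPO chosen-reward gradient magnitude β X₂^β / (X₁(X₁^β + X₂^β)) is 0. -/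
theorem stmt12 (β X₁ : ℝ) (hβ : 0 < β) (h1 : 0 < X₁) :
    Filter.Tendsto (fun X₂ : ℝ => β * X₂ ^ β / (X₁ * (X₁ ^ β + X₂ ^ β)))
      (nhdsWithin 0 (Set.Ioi 0)) (nhds 0) := by
  have hc : ContinuousAt (fun X₂ : ℝ => X₂ ^ β) 0 :=
    Real.continuousAt_rpow_const 0 β (Or.inr hβ.le)
  have hden : X₁ * (X₁ ^ β + (0:ℝ) ^ β) ≠ 0 := by
    have : 0 < X₁ ^ β := Real.rpow_pos_of_pos h1 β
    rw [Real.zero_rpow hβ.ne']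
    positivity
  have hC : ContinuousAt (fun X₂ : ℝ => β * X₂ ^ β / (X₁ * (X₁ ^ β + X₂ ^ β))) 0 :=
    ((continuousAt_const.mul hc).div
      (continuousAt_const.mul (continuousAt_const.add hc)) hden)
  have := hC.tendsto.mono_left (nhdsWithin_le_nhds (s := Set.Ioi 0))
  simpa [Real.zero_rpow hβ.ne', mul_zero, zero_div] using this
end

section
/- Let β > 0, p₁, p₂ > 0 with p₁ p₂ < 1, and f(z) = (1/p₂^β)(z^β + p₂^β)/(p₁^β z^β + 1). Then for all z > 0, 1 < f(z) < 1/(p₁ p₂)^β. -/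
theorem stmt19 (β p₁ p₂ : ℝ) (hβ : 0 < β) (hp1 : 0 < p₁) (hp2 : 0 < p₂)
    (hp : p₁ * p₂ < 1) :
    ∀ z : ℝ, 0 < z →
      1 < (1 / p₂ ^ β) * ((z ^ β + p₂ ^ β) / (p₁ ^ β * z ^ β + 1)) ∧
      (1 / p₂ ^ β) * ((z ^ β + p₂ ^ β) / (p₁ ^ β * z ^ β + 1)) < 1 / (p₁ * p₂) ^ β := by
  intro z hz
  have ha : (0:ℝ) < p₁ ^ β := Real.rpow_pos_of_pos hp1 β
  have hb : (0:ℝ) < p₂ ^ β := Real.rpow_pos_of_pos hp2 β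
  have ht : (0:ℝ) < z ^ β := Real.rpow_pos_of_pos hz β
  have hab : p₁ ^ β * p₂ ^ β < 1 := by
    rw [← Real.mul_rpow hp1.le hp2.le]
    exact Real.rpow_lt_one (by positivity) hp hβ
  have hmul : (p₁ * p₂) ^ β = p₁ ^ β * p₂ ^ β := Real.mul_rpow hp1.le hp2.le
  have hd : (0:ℝ) < p₁ ^ β * z ^ β + 1 := by positivity
  constructor
  · rw [(by field_simp : (1 / p₂ ^ β) * ((z ^ β + p₂ ^ β) / (p₁ ^ β * z ^ β + 1)) = (z ^ β + p₂ ^ β) / (p₂ ^ β * (p₁ ^ β * z ^ β + 1)))]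
    rw [lt_div_iff₀ (by positivity)]
    nlinarith
  · rw [(by field_simp : (1 / p₂ ^ β) * ((z ^ β + p₂ ^ β) / (p₁ ^ β * z ^ β + 1)) = (z ^ β + p₂ ^ β) / (p₂ ^ β * (p₁ ^ β * z ^ β + 1))), hmul]
    rw [div_lt_div_iff₀ (by positivity) (by positivity)]
    nlinarith
end
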